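/- Let ν > 0, 0 < τ ≤ 1, and let a : 𝕋 → ℝ be smooth with ‖a‖_{H^{12}} ≤ M. Set A_τ = (1 + ν τ ∂_x^4 + τ ∂_x^2)^{-1} (the Fourier multiplier with symbol (1 + τ(ν k^4 - k^2))^{-1}) and S_L(τ) = e^{-τ(ν ∂_x^4 + ∂_x^2)}. Then ‖A_τ a - S_L(τ) a‖_{H^1(𝕋)} ≤ C(ν, M) τ^2. -/

import Mathlib

noncomputable section
open scoped Real

/-- `H^k` Sobolev norm on the 2π-torus. -/
def sobNorm (k : ℕ) (f : ℝ → ℝ) : ℝ :=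
  Real.sqrt (∑ j ∈ Finset.range (k + 1), ∫ x in (-π)..π, (iteratedDeriv j f x) ^ 2)

/-- `k`-th Fourier coefficient of a 2π-periodic function. -/
def fcoef (f : ℝ → ℝ) (k : ℤ) : ℂ :=
  (2 * π)⁻¹ • ∫ x in (-π)..π, (f x : ℂ) * Complex.exp (-Complex.I * (k : ℂ) * (x : ℂ))

/-- Fourier multiplier operator with real symbol `m`. -/
def fmult (m : ℤ → ℝ) (f : ℝ → ℝ) (x : ℝ) : ℝ :=
  (∑' k : ℤ, ((m k : ℝ) : ℂ) * fcoef f k * Complex.exp (Complex.I * (k : ℂ) * (x : ℂ))).re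

/-- The linear propagator `S_L(t) = e^{-t(ν ∂_x⁴ + ∂_x²)}`. -/
def SL (ν t : ℝ) (f : ℝ → ℝ) : ℝ → ℝ :=
  fmult (fun k => Real.exp (-t * (ν * (k : ℝ) ^ 4 - (k : ℝ) ^ 2))) f

/-- The resolvent-type operator `A_τ = (1 + ντ ∂_x⁴ + τ ∂_x²)⁻¹`. -/
def Aop (ν τ : ℝ) (f : ℝ → ℝ) : ℝ → ℝ :=
  fmult (fun k => (1 + τ * (ν * (k : ℝ) ^ 4 - (k : ℝ) ^ 2))⁻¹) f

/-! ### Auxiliary lemmas -/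

/-- Key elementary estimate: `|(1+y)⁻¹ - e^{-y}| ≤ 2 y²` for `y ≥ -1/2`. -/
lemma key_symbol_est {y : ℝ} (h : -(1/2) ≤ y) :
    |(1 + y)⁻¹ - Real.exp (-y)| ≤ 2 * y ^ 2 := by
  have h1 : (0:ℝ) < 1 + y := by linarith
  have e1 : 1 - y ≤ Real.exp (-y) := by have := Real.add_one_le_exp (-y); linarith
  have e2 : 1 + y ≤ Real.exp y := by have := Real.add_one_le_exp y; linarith
  have epos : 0 < Real.exp (-y) := Real.exp_pos _
  have emul : Real.exp y * Real.exp (-y) = 1 := by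
    rw [← Real.exp_add]; simp
  have e3 : (1 + y) * Real.exp (-y) ≤ 1 := by
    calc (1 + y) * Real.exp (-y) ≤ Real.exp y * Real.exp (-y) :=
          mul_le_mul_of_nonneg_right e2 epos.le
    _ = 1 := emul
  have e4 : 1 - y ^ 2 ≤ (1 + y) * Real.exp (-y) := by
    have := mul_le_mul_of_nonneg_left e1 h1.le
    nlinarith
  have hinv : (1 + y) * (1 + y)⁻¹ = 1 := mul_inv_cancel₀ h1.ne'
  have hinvpos : 0 < (1+y)⁻¹ := inv_pos.mpr h1
  rw [abs_le]
  constructor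
  · nlinarith
  · nlinarith

lemma y_lower_bound (ν τ : ℝ) (hν : 0 < ν) (hτ : 0 < τ) (hτν : τ ≤ ν / 4) (k : ℤ) :
    -(1/2) ≤ τ * (ν * (k:ℝ) ^ 4 - (k:ℝ) ^ 2) := by
  set t : ℝ := (k:ℝ) ^ 2 with ht
  have ht0 : 0 ≤ t := sq_nonneg _
  set Q : ℝ := ν * (k:ℝ) ^ 4 - (k:ℝ) ^ 2 with hQ
  have hQt : Q = ν * t ^ 2 - t := by rw [hQ, ht]; ring
  have hQlow : -1 ≤ 4 * ν * Q := by
    rw [hQt]; nlinarith [sq_nonneg (2 * ν * t - 1)]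
  have h5 : 0 ≤ τ * (4 * ν * Q + 1) := mul_nonneg hτ.le (by linarith)
  nlinarith [mul_pos hν hτ, mul_pos hν hν]

lemma symbol_diff_bound (ν τ : ℝ) (hν : 0 < ν) (hτ : 0 < τ) (hτν : τ ≤ ν / 4) (k : ℤ) :
    |(1 + τ * (ν * (k:ℝ) ^ 4 - (k:ℝ) ^ 2))⁻¹ -
      Real.exp (-τ * (ν * (k:ℝ) ^ 4 - (k:ℝ) ^ 2))| ≤
    2 * τ ^ 2 * ((ν + 1) * (1 + (k:ℝ) ^ 2) ^ 2) ^ 2 := by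
  set t : ℝ := (k:ℝ) ^ 2 with ht
  have ht0 : 0 ≤ t := sq_nonneg _
  set Q : ℝ := ν * (k:ℝ) ^ 4 - (k:ℝ) ^ 2 with hQ
  have hQt : Q = ν * t ^ 2 - t := by rw [hQ, ht]; ring
  have hy : -(1/2) ≤ τ * Q := y_lower_bound ν τ hν hτ hτν k
  have h1 := key_symbol_est hy
  have hQabs : Q ^ 2 ≤ ((ν + 1) * (1 + t) ^ 2) ^ 2 := by
    have hup : Q ≤ (ν + 1) * (1 + t) ^ 2 := by rw [hQt]; nlinarith
    have hlo : -((ν + 1) * (1 + t) ^ 2) ≤ Q := by rw [hQt]; nlinarith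
    exact sq_le_sq' hlo hup
  have : -τ * Q = -(τ * Q) := by ring
  rw [this]
  calc |(1 + τ * Q)⁻¹ - Real.exp (-(τ * Q))| ≤ 2 * (τ * Q) ^ 2 := h1
  _ = 2 * τ ^ 2 * Q ^ 2 := by ring
  _ ≤ 2 * τ ^ 2 * ((ν + 1) * (1 + t) ^ 2) ^ 2 := by nlinarith

lemma periodic_deriv {f : ℝ → ℝ} (hp : Function.Periodic f (2 * π)) :
    Function.Periodic (deriv f) (2 * π) := by
  intro x
  have : (fun y => f (y + 2 * π)) = f := funext fun y => hp y
  calc deriv f (x + 2 * π) = deriv (fun y => f (y + 2 * π)) x := (deriv_comp_add_const _ _ _).symm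
  _ = deriv f x := by rw [this]

lemma fcoef_deriv {f : ℝ → ℝ} (hf : ContDiff ℝ (⊤:ℕ∞) f) (hp : Function.Periodic f (2 * π)) (k : ℤ) :
    fcoef (deriv f) k = (Complex.I * (k : ℂ)) * fcoef f k := by
  have hfd : Differentiable ℝ f := hf.differentiable (by simp)
  have hfc : Continuous f := hf.continuous
  have hdc : Continuous (deriv f) := (contDiff_infty_iff_deriv.mp hf).2.continuous
  set v : ℝ → ℂ := fun x => Complex.exp (-Complex.I * (k : ℂ) * (x : ℂ)) with hv
  have hvd : ∀ x : ℝ, HasDerivAt v (-Complex.I * (k : ℂ) * v x) x := by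
    intro x
    have h1 : HasDerivAt (fun x : ℝ => (x : ℂ)) 1 x := Complex.ofRealCLM.hasDerivAt
    have h2 : HasDerivAt (fun x : ℝ => -Complex.I * (k : ℂ) * (x : ℂ))
        (-Complex.I * (k : ℂ)) x := by
      simpa using h1.const_mul (-Complex.I * (k : ℂ))
    simpa [hv, mul_comm] using h2.cexp
  have hud : ∀ x : ℝ, HasDerivAt (fun x : ℝ => ((f x : ℂ))) (((deriv f x : ℝ) : ℂ)) x := by
    intro x
    exact HasDerivAt.ofReal_comp ((hfd x).hasDerivAt)
  have hvc : Continuous v := by fun_prop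
  have hibp := intervalIntegral.integral_deriv_mul_eq_sub_of_hasDerivAt
    (u := fun x : ℝ => ((f x : ℂ))) (v := v)
    (u' := fun x : ℝ => (((deriv f x : ℝ) : ℂ))) (v' := fun x => -Complex.I * (k : ℂ) * v x)
    (a := -π) (b := π)
    (by fun_prop) (by fun_prop)
    (fun x _ => hud x) (fun x _ => hvd x)
    (by apply Continuous.intervalIntegrable; fun_prop)
    (by apply Continuous.intervalIntegrable; fun_prop)
  -- boundary term vanishes
  have hfper : f π = f (-π) := by
    have := hp (-π); rw [show -π + 2*π = π by ring] at this; exact this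
  have hvper : v π = v (-π) := by
    rw [hv]
    simp only
    rw [show -Complex.I * (k:ℂ) * (π:ℂ) = -Complex.I * (k:ℂ) * ((-π:ℝ):ℂ) + (-k : ℤ) * (2 * π * Complex.I) by push_cast; ring]
    rw [Complex.exp_add, Complex.exp_int_mul_two_pi_mul_I, mul_one]
  have hbd : (f π : ℂ) * v π - (f (-π) : ℂ) * v (-π) = 0 := by
    rw [hfper, hvper]; ring
  rw [hbd] at hibp
  have hsplit : (∫ x in (-π)..π, (((deriv f x : ℝ) : ℂ)) * v x) =
      - ∫ x in (-π)..π, ((f x : ℂ)) * (-Complex.I * (k : ℂ) * v x) := by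
    have hadd := intervalIntegral.integral_add (μ := MeasureTheory.volume) (a := -π) (b := π)
      (f := fun x : ℝ => (((deriv f x : ℝ) : ℂ)) * v x)
      (g := fun x : ℝ => ((f x : ℂ)) * (-Complex.I * (k : ℂ) * v x))
      (by apply Continuous.intervalIntegrable; fun_prop)
      (by apply Continuous.intervalIntegrable; fun_prop)
    rw [hibp] at hadd
    linear_combination -hadd
  have hpull : (∫ x in (-π)..π, ((f x : ℂ)) * (-Complex.I * (k : ℂ) * v x)) =
      (-Complex.I * (k : ℂ)) * ∫ x in (-π)..π, ((f x : ℂ)) * v x := by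
    rw [← intervalIntegral.integral_const_mul]
    congr 1; funext x; ring
  rw [fcoef, fcoef, hsplit, hpull, Complex.real_smul, Complex.real_smul]
  push_cast
  ring

lemma contDiff_deriv_top {f : ℝ → ℝ} (hf : ContDiff ℝ (⊤:ℕ∞) f) : ContDiff ℝ (⊤:ℕ∞) (deriv f) :=
  (contDiff_infty_iff_deriv.mp hf).2

lemma iter_pack {f : ℝ → ℝ} (hf : ContDiff ℝ (⊤:ℕ∞) f) (hp : Function.Periodic f (2 * π)) :
    ∀ n : ℕ, ContDiff ℝ (⊤:ℕ∞) (iteratedDeriv n f) ∧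
      Function.Periodic (iteratedDeriv n f) (2 * π) ∧
      ∀ k : ℤ, fcoef (iteratedDeriv n f) k = (Complex.I * (k:ℂ)) ^ n * fcoef f k := by
  intro n
  induction n generalizing f with
  | zero =>
    refine ⟨by simpa [iteratedDeriv_zero] using hf, by simpa [iteratedDeriv_zero] using hp, fun k => by simp [iteratedDeriv_zero]⟩
  | succ n ih =>
    have hdf : ContDiff ℝ (⊤:ℕ∞) (deriv f) := contDiff_deriv_top hf
    have hdp : Function.Periodic (deriv f) (2 * π) := periodic_deriv hp
    obtain ⟨h1, h2, h3⟩ := ih hdf hdp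
    refine ⟨?_, ?_, ?_⟩
    · rw [iteratedDeriv_succ']; exact h1
    · rw [iteratedDeriv_succ']; exact h2
    · intro k
      rw [iteratedDeriv_succ', h3 k, fcoef_deriv hf hp k]
      ring

lemma fcoef_norm_le {g : ℝ → ℝ} (hg : Continuous g) (k : ℤ) :
    ‖fcoef g k‖ ≤ (2 * π)⁻¹ * (π + (∫ x in (-π)..π, (g x) ^ 2) / 2) := by
  have hpi : (0:ℝ) < π := Real.pi_pos
  have h1 : ‖fcoef g k‖ = (2*π)⁻¹ * ‖∫ x in (-π)..π, (g x : ℂ) * Complex.exp (-Complex.I * (k : ℂ) * (x : ℂ))‖ := by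
    rw [fcoef, norm_smul, Real.norm_eq_abs, abs_of_pos (by positivity)]
  rw [h1]
  have h2 : ‖∫ x in (-π)..π, (g x : ℂ) * Complex.exp (-Complex.I * (k : ℂ) * (x : ℂ))‖ ≤
      ∫ x in (-π)..π, |g x| := by
    refine le_trans (intervalIntegral.norm_integral_le_integral_norm (by linarith)) ?_
    refine le_of_eq (intervalIntegral.integral_congr fun x _ => ?_)
    rw [norm_mul, Complex.norm_exp]
    have : (-Complex.I * (k : ℂ) * (x : ℂ)).re = 0 := by simp
    rw [this, Real.exp_zero, mul_one, Complex.norm_real, Real.norm_eq_abs]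
  have h3 : (∫ x in (-π)..π, |g x|) ≤ π + (∫ x in (-π)..π, (g x) ^ 2) / 2 := by
    have hint : (∫ x in (-π)..π, |g x|) ≤ ∫ x in (-π)..π, (1 + (g x) ^ 2) / 2 := by
      apply intervalIntegral.integral_mono_on (by linarith)
      · exact (hg.abs).intervalIntegrable _ _
      · exact ((continuous_const.add (hg.pow 2)).div_const 2).intervalIntegrable _ _
      · intro x _
        nlinarith [sq_nonneg (|g x| - 1), sq_abs (g x)]
    have heq : (∫ x in (-π)..π, (1 + (g x) ^ 2) / 2) = π + (∫ x in (-π)..π, (g x) ^ 2) / 2 := by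
      rw [intervalIntegral.integral_div, intervalIntegral.integral_add (f := fun _ => (1:ℝ)) (g := fun x => g x ^ 2)
        intervalIntegrable_const ((hg.pow 2).intervalIntegrable _ _)]
      simp; ring
    linarith
  have hnn : (0:ℝ) ≤ (2*π)⁻¹ := by positivity
  calc (2*π)⁻¹ * ‖_‖ ≤ (2*π)⁻¹ * (∫ x in (-π)..π, |g x|) := by
        exact mul_le_mul_of_nonneg_left h2 hnn
  _ ≤ (2*π)⁻¹ * (π + (∫ x in (-π)..π, (g x) ^ 2) / 2) := mul_le_mul_of_nonneg_left h3 hnn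

set_option maxHeartbeats 2000000 in
/-- `‖A_τ a - S_L(τ) a‖_{H¹} ≤ C(ν, M) τ²` for smooth data with `‖a‖_{H¹²} ≤ M`. -/
theorem resolvent_semigroup_compare (ν M : ℝ) (hν : 0 < ν) (hM : 0 < M) :
    ∃ C : ℝ, 0 < C ∧ ∀ (τ : ℝ) (a : ℝ → ℝ),
      0 < τ → τ ≤ min 1 (ν / 4) →
      ContDiff ℝ (⊤ : ℕ∞) a → Function.Periodic a (2 * π) → sobNorm 12 a ≤ M →
      sobNorm 1 (fun x => Aop ν τ a x - SL ν τ a x) ≤ C * τ ^ 2 := by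
  have hpi : (0:ℝ) < π := Real.pi_pos
  set B : ℝ := (2*π)⁻¹ * (π + M^2/2) with hB
  have hBpos : 0 < B := by positivity
  have hSigsum : Summable (fun k : ℤ => ((k:ℝ)^2)⁻¹) := by
    have := (Real.summable_one_div_int_pow (p := 2)).mpr one_lt_two
    simpa [one_div] using this
  set Sig2 : ℝ := ∑' k : ℤ, ((k:ℝ)^2)⁻¹ with hSig
  have hSigpos : 0 < Sig2 := by
    rw [hSig]
    refine Summable.tsum_pos hSigsum (fun k => by positivity) 1 (by norm_num)
  refine ⟨64 * Real.sqrt π * Sig2 * (ν+1)^2 * B + 1, ?_, ?_⟩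
  · have h0 : (0:ℝ) ≤ 64 * Real.sqrt π * Sig2 * (ν+1)^2 * B := by
      have := Real.sqrt_nonneg π
      positivity
    linarith
  intro τ a hτ hτle ha hap hsob
  have hτν : τ ≤ ν/4 := le_trans hτle (min_le_right _ _)
  have ha' : ContDiff ℝ (⊤:ℕ∞) a := ha.of_le (by simp)
  set c : ℤ → ℂ := fun k => fcoef a k with hc
  -- Sobolev bound on 12th derivative
  have hint_nonneg : ∀ j : ℕ, 0 ≤ ∫ x in (-π)..π, (iteratedDeriv j a x)^2 := fun j =>
    intervalIntegral.integral_nonneg (by linarith) (fun x _ => sq_nonneg _)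
  have hsum_nonneg : 0 ≤ ∑ j ∈ Finset.range 13, ∫ x in (-π)..π, (iteratedDeriv j a x)^2 :=
    Finset.sum_nonneg fun j _ => hint_nonneg j
  have hsum_le : (∑ j ∈ Finset.range 13, ∫ x in (-π)..π, (iteratedDeriv j a x)^2) ≤ M^2 := by
    have hs : Real.sqrt (∑ j ∈ Finset.range 13, ∫ x in (-π)..π, (iteratedDeriv j a x)^2) ≤ M :=
      hsob
    nlinarith [Real.sq_sqrt hsum_nonneg, Real.sqrt_nonneg
      (∑ j ∈ Finset.range 13, ∫ x in (-π)..π, (iteratedDeriv j a x)^2)]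
  have hI12 : (∫ x in (-π)..π, (iteratedDeriv 12 a x)^2) ≤ M^2 := by
    have h := Finset.single_le_sum
      (f := fun j => ∫ x in (-π)..π, (iteratedDeriv j a x)^2)
      (fun j _ => hint_nonneg j) (show 12 ∈ Finset.range 13 by decide)
    linarith
  have hI0 : (∫ x in (-π)..π, (a x)^2) ≤ M^2 := by
    have h := Finset.single_le_sum
      (f := fun j => ∫ x in (-π)..π, (iteratedDeriv j a x)^2)
      (fun j _ => hint_nonneg j) (show 0 ∈ Finset.range 13 by decide)
    simpa [iteratedDeriv_zero] using le_trans h hsum_le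
  -- coefficient bounds
  obtain ⟨hit_cd, hit_per, hit_fc⟩ := iter_pack ha' hap 12
  have hc12 : ∀ k : ℤ, ‖c k‖ * |(k:ℝ)|^12 ≤ B := by
    intro k
    have hb := fcoef_norm_le hit_cd.continuous k
    rw [hit_fc k] at hb
    have hnorm : ‖(Complex.I * (k:ℂ))^12 * fcoef a k‖ = |(k:ℝ)|^12 * ‖c k‖ := by
      rw [norm_mul, norm_pow, norm_mul, Complex.norm_I, one_mul]
      norm_num [Complex.norm_intCast]
      exact Or.inl rfl
    rw [hnorm] at hb
    have hBle : (2*π)⁻¹ * (π + (∫ x in (-π)..π, (iteratedDeriv 12 a x)^2)/2) ≤ B := by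
      rw [hB]
      have : (0:ℝ) ≤ (2*π)⁻¹ := by positivity
      apply mul_le_mul_of_nonneg_left _ this
      linarith
    calc ‖c k‖ * |(k:ℝ)|^12 = |(k:ℝ)|^12 * ‖c k‖ := by ring
    _ ≤ B := le_trans hb hBle
  have hc0 : ∀ k : ℤ, ‖c k‖ ≤ B := by
    intro k
    have hb := fcoef_norm_le ha'.continuous k
    refine le_trans hb ?_
    rw [hB]
    have : (0:ℝ) ≤ (2*π)⁻¹ := by positivity
    apply mul_le_mul_of_nonneg_left _ this
    linarith
  -- the difference symbol
  set δ : ℤ → ℝ := fun k =>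
    (1 + τ*(ν*(k:ℝ)^4 - (k:ℝ)^2))⁻¹ - Real.exp (-τ*(ν*(k:ℝ)^4 - (k:ℝ)^2)) with hδ
  set ψ : ℤ → ℝ → ℂ := fun k x =>
    ((δ k : ℂ) * c k) * Complex.exp (Complex.I * (k:ℂ) * (x:ℂ)) with hψ
  set ψ' : ℤ → ℝ → ℂ := fun k x =>
    ((δ k : ℂ) * c k) * (Complex.exp (Complex.I * (k:ℂ) * (x:ℂ)) * (Complex.I * (k:ℂ))) with hψ'
  set K : ℝ := 32 * τ^2 * (ν+1)^2 * B with hK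
  have hKpos : 0 < K := by positivity
  set u : ℤ → ℝ := fun k => K * ((k:ℝ)^2)⁻¹ with hu
  have hexp1 : ∀ (k:ℤ) (x:ℝ), ‖Complex.exp (Complex.I * (k:ℂ) * (x:ℂ))‖ = 1 := by
    intro k x
    rw [Complex.norm_exp]
    norm_num [Complex.mul_re, Complex.mul_im]
  have hψnorm : ∀ k x, ‖ψ k x‖ = |δ k| * ‖c k‖ := by
    intro k x
    rw [hψ]; simp only
    rw [norm_mul, norm_mul, hexp1, mul_one, Complex.norm_real, Real.norm_eq_abs]
  have hψ'norm : ∀ k x, ‖ψ' k x‖ = |δ k| * ‖c k‖ * |(k:ℝ)| := by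
    intro k x
    rw [hψ']; simp only
    rw [norm_mul, norm_mul, norm_mul, hexp1, norm_mul, Complex.norm_I, one_mul,
      Complex.norm_real, Real.norm_eq_abs, Complex.norm_intCast]
    push_cast
    ring
  -- small coefficients away from 0
  have hcsmall : ∀ k : ℤ, k ≠ 0 → ‖c k‖ ≤ B * ((k:ℝ)^2)⁻¹ := by
    intro k hk
    have hk1 : (1:ℝ) ≤ |(k:ℝ)| := by
      have := Int.one_le_abs hk
      calc (1:ℝ) ≤ |k| := by exact_mod_cast this
      _ = |(k:ℝ)| := by push_cast; rfl
    have ht1 : (1:ℝ) ≤ (k:ℝ)^2 := by nlinarith [sq_abs ((k:ℝ))]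
    have ht0 : (0:ℝ) < (k:ℝ)^2 := by linarith
    have habs : |(k:ℝ)|^12 = ((k:ℝ)^2)^6 := by rw [← sq_abs]; ring
    have h12 : ‖c k‖ * ((k:ℝ)^2)^6 ≤ B := by rw [← habs]; exact hc12 k
    have hcnn : (0:ℝ) ≤ ‖c k‖ := norm_nonneg _
    rw [← div_eq_mul_inv, le_div_iff₀ ht0]
    calc ‖c k‖ * (k:ℝ)^2 ≤ ‖c k‖ * ((k:ℝ)^2)^6 := by
          apply mul_le_mul_of_nonneg_left _ hcnn
          calc (k:ℝ)^2 = ((k:ℝ)^2)^1 := (pow_one _).symm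
          _ ≤ ((k:ℝ)^2)^6 := pow_le_pow_right₀ ht1 (by norm_num)
    _ ≤ B := h12
  -- core bounds
  have hδb : ∀ k : ℤ, |δ k| ≤ 2 * τ^2 * ((ν + 1) * (1 + (k:ℝ)^2)^2)^2 :=
    fun k => symbol_diff_bound ν τ hν hτ hτν k
  have hδ0 : δ 0 = 0 := by norm_num [hδ]
  have hcore' : ∀ k : ℤ, |δ k| * ‖c k‖ * |(k:ℝ)| ≤ u k := by
    intro k
    rcases eq_or_ne k 0 with rfl | hk
    · simp [hδ0, hu]
    · have hk1 : (1:ℝ) ≤ |(k:ℝ)| := by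
        have := Int.one_le_abs hk
        calc (1:ℝ) ≤ |k| := by exact_mod_cast this
        _ = |(k:ℝ)| := by push_cast; rfl
      set t : ℝ := (k:ℝ)^2 with htdef
      have ht1 : (1:ℝ) ≤ t := by rw [htdef]; nlinarith [sq_abs ((k:ℝ))]
      have ht0 : (0:ℝ) < t := by linarith
      have hkt : |(k:ℝ)| ≤ t := by rw [htdef]; nlinarith [sq_abs ((k:ℝ))]
      have hδb2 : |δ k| ≤ 32 * τ^2 * (ν+1)^2 * t^4 := by
        have h2 : (1+t)^2 ≤ 4*t^2 := by nlinarith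
        have h3 : ((ν+1)*(1+t)^2)^2 ≤ ((ν+1)*(4*t^2))^2 := by
          apply pow_le_pow_left₀ (by positivity)
          exact mul_le_mul_of_nonneg_left h2 (by linarith)
        calc |δ k| ≤ 2*τ^2*((ν+1)*(1+t)^2)^2 := hδb k
        _ ≤ 2*τ^2*(((ν+1)*(4*t^2))^2) := mul_le_mul_of_nonneg_left h3 (by positivity)
        _ = 32*τ^2*(ν+1)^2*t^4 := by ring
      have hcnn : 0 ≤ ‖c k‖ := norm_nonneg _
      have hδnn : 0 ≤ |δ k| := abs_nonneg _
      have hcB : ‖c k‖ * t^6 ≤ B := by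
        have := hc12 k
        have habs : |(k:ℝ)|^12 = t^6 := by rw [htdef, ← sq_abs]; ring
        rw [habs] at this; exact this
      have hP : (0:ℝ) ≤ 32 * τ^2 * (ν+1)^2 := by positivity
      rw [hu]; simp only
      rw [← htdef, ← div_eq_mul_inv, le_div_iff₀ ht0, hK]
      calc |δ k| * ‖c k‖ * |(k:ℝ)| * t ≤ (32 * τ^2 * (ν+1)^2 * t^4) * ‖c k‖ * t * t := by
            have hs1 : |δ k| * ‖c k‖ ≤ (32 * τ^2 * (ν+1)^2 * t^4) * ‖c k‖ :=
              mul_le_mul_of_nonneg_right hδb2 hcnn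
            have hs2 : |δ k| * ‖c k‖ * |(k:ℝ)| ≤ (32 * τ^2 * (ν+1)^2 * t^4) * ‖c k‖ * t :=
              mul_le_mul hs1 hkt (abs_nonneg _) (by positivity)
            exact mul_le_mul_of_nonneg_right hs2 ht0.le
      _ = (32 * τ^2 * (ν+1)^2) * (‖c k‖ * t^6) := by ring
      _ ≤ (32 * τ^2 * (ν+1)^2) * B := mul_le_mul_of_nonneg_left hcB hP
  have hcore : ∀ k : ℤ, |δ k| * ‖c k‖ ≤ u k := by
    intro k
    rcases eq_or_ne k 0 with rfl | hk
    · simp [hδ0, hu]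
    · have hk1 : (1:ℝ) ≤ |(k:ℝ)| := by
        have := Int.one_le_abs hk
        calc (1:ℝ) ≤ |k| := by exact_mod_cast this
        _ = |(k:ℝ)| := by push_cast; rfl
      refine le_trans ?_ (hcore' k)
      have : 0 ≤ |δ k| * ‖c k‖ := mul_nonneg (abs_nonneg _) (norm_nonneg _)
      nlinarith
  have husum : Summable u := hSigsum.mul_left K
  have htsum_u : ∑' k, u k = K * Sig2 := by rw [hSig, hu]; exact tsum_mul_left
  -- derivatives of the summands
  have hψd : ∀ (k : ℤ) (x : ℝ), HasDerivAt (ψ k) (ψ' k x) x := by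
    intro k x
    have h1 : HasDerivAt (fun x : ℝ => (x:ℂ)) 1 x := Complex.ofRealCLM.hasDerivAt
    have h2 : HasDerivAt (fun x : ℝ => Complex.I * (k:ℂ) * (x:ℂ)) (Complex.I * (k:ℂ)) x := by
      simpa [mul_assoc] using h1.const_mul (Complex.I * (k:ℂ))
    exact h2.cexp.const_mul _
  have hgd : ∀ (k : ℤ) (x : ℝ), HasDerivAt (fun y => (ψ k y).re) ((ψ' k x).re) x := by
    intro k x
    exact Complex.reCLM.hasFDerivAt.comp_hasDerivAt x (hψd k x)
  have hg'b : ∀ (k : ℤ) (x : ℝ), ‖(ψ' k x).re‖ ≤ u k := by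
    intro k x
    rw [Real.norm_eq_abs]
    refine le_trans (Complex.abs_re_le_norm _) ?_
    rw [hψ'norm]
    exact hcore' k
  have hgb : ∀ (k : ℤ) (x : ℝ), ‖(ψ k x).re‖ ≤ u k := by
    intro k x
    rw [Real.norm_eq_abs]
    refine le_trans (Complex.abs_re_le_norm _) ?_
    rw [hψnorm]
    exact hcore k
  have hsum_g : ∀ x : ℝ, Summable (fun k => (ψ k x).re) := fun x =>
    Summable.of_norm_bounded husum (fun k => hgb k x)
  have hsum_ψ : ∀ x : ℝ, Summable (fun k => ψ k x) := fun x =>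
    Summable.of_norm_bounded husum (fun k => by rw [hψnorm]; exact hcore k)
  set D : ℝ → ℝ := fun x => ∑' k, (ψ k x).re with hD
  set D' : ℝ → ℝ := fun x => ∑' k, (ψ' k x).re with hD'
  have hDd : ∀ x : ℝ, HasDerivAt D (D' x) x := fun x =>
    hasDerivAt_tsum (y₀ := 0) husum hgd hg'b (hsum_g 0) x
  -- bounds on D and D'
  have hDb : ∀ x : ℝ, |D x| ≤ K * Sig2 := by
    intro x
    have hsn : Summable (fun k => ‖(ψ k x).re‖) :=
      Summable.of_nonneg_of_le (fun k => norm_nonneg _) (fun k => hgb k x) husum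
    calc |D x| = ‖∑' k, (ψ k x).re‖ := (Real.norm_eq_abs _).symm
    _ ≤ ∑' k, ‖(ψ k x).re‖ := norm_tsum_le_tsum_norm hsn
    _ ≤ ∑' k, u k := Summable.tsum_le_tsum (fun k => hgb k x) hsn husum
    _ = K * Sig2 := htsum_u
  have hsum_g' : ∀ x : ℝ, Summable (fun k => (ψ' k x).re) := fun x =>
    Summable.of_norm_bounded husum (fun k => hg'b k x)
  have hD'b : ∀ x : ℝ, |D' x| ≤ K * Sig2 := by
    intro x
    have hsn : Summable (fun k => ‖(ψ' k x).re‖) :=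
      Summable.of_nonneg_of_le (fun k => norm_nonneg _) (fun k => hg'b k x) husum
    calc |D' x| = ‖∑' k, (ψ' k x).re‖ := (Real.norm_eq_abs _).symm
    _ ≤ ∑' k, ‖(ψ' k x).re‖ := norm_tsum_le_tsum_norm hsn
    _ ≤ ∑' k, u k := Summable.tsum_le_tsum (fun k => hg'b k x) hsn husum
    _ = K * Sig2 := htsum_u
  -- continuity
  have hDcont : Continuous D := by
    have : Differentiable ℝ D := fun x => (hDd x).differentiableAt
    exact this.continuous
  have hD'cont : Continuous D' := by
    refine continuous_tsum (fun k => ?_) husum (fun k x => hg'b k x)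
    exact Complex.continuous_re.comp (by fun_prop)
  -- identification with Aop - SL
  have hAeq : ∀ x : ℝ, Aop ν τ a x - SL ν τ a x = D x := by
    intro x
    have hy : ∀ k : ℤ, -(1/2) ≤ τ * (ν*(k:ℝ)^4 - (k:ℝ)^2) := fun k =>
      y_lower_bound ν τ hν hτ hτν k
    have hmA : ∀ k : ℤ, |(1 + τ*(ν*(k:ℝ)^4 - (k:ℝ)^2))⁻¹| ≤ 2 := by
      intro k
      have h1 : (1:ℝ)/2 ≤ 1 + τ*(ν*(k:ℝ)^4 - (k:ℝ)^2) := by have := hy k; linarith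
      rw [abs_of_nonneg (by positivity)]
      rw [inv_le_comm₀ (by linarith) (by norm_num)]
      linarith
    have hmS : ∀ k : ℤ, |Real.exp (-τ * (ν*(k:ℝ)^4 - (k:ℝ)^2))| ≤ 2 := by
      intro k
      have h1 : -τ * (ν*(k:ℝ)^4 - (k:ℝ)^2) ≤ 1/2 := by have := hy k; linarith
      rw [abs_of_pos (Real.exp_pos _)]
      calc Real.exp (-τ * (ν*(k:ℝ)^4 - (k:ℝ)^2)) ≤ Real.exp (1/2) := Real.exp_le_exp.mpr h1
      _ ≤ 2 := by
          nlinarith [Real.exp_one_lt_d9, Real.exp_pos (1/2 : ℝ),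
            (by rw [← Real.exp_add]; norm_num : Real.exp (1/2 : ℝ) * Real.exp (1/2 : ℝ) = Real.exp 1)]
    have hsumbound : ∀ (m : ℤ → ℝ), (∀ k, |m k| ≤ 2) →
        Summable (fun k : ℤ => ((m k : ℝ) : ℂ) * c k *
          Complex.exp (Complex.I * (k:ℂ) * (x:ℂ))) := by
      intro m hm
      refine Summable.of_norm_bounded_eventually (g := fun k : ℤ => 2 * B * ((k:ℝ)^2)⁻¹)
        ((hSigsum.mul_left (2*B))) ?_
      rw [Filter.eventually_cofinite]
      refine Set.Finite.subset (Set.finite_singleton (0:ℤ)) ?_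
      intro k hk
      simp only [Set.mem_setOf_eq] at hk
      simp only [Set.mem_singleton_iff]
      by_contra hk0
      apply hk
      rw [norm_mul, norm_mul, hexp1, mul_one, Complex.norm_real, Real.norm_eq_abs]
      calc |m k| * ‖c k‖ ≤ 2 * (B * ((k:ℝ)^2)⁻¹) :=
            mul_le_mul (hm k) (hcsmall k hk0) (norm_nonneg _) (by norm_num)
      _ = 2 * B * ((k:ℝ)^2)⁻¹ := by ring
    have hsA := hsumbound _ hmA
    have hsS := hsumbound _ hmS
    simp only [Aop, SL, fmult]
    rw [← Complex.sub_re, ← Summable.tsum_sub hsA hsS]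
    have hcongr : (fun k : ℤ =>
        (((1 + τ*(ν*(k:ℝ)^4 - (k:ℝ)^2))⁻¹ : ℝ) : ℂ) * c k *
          Complex.exp (Complex.I * (k:ℂ) * (x:ℂ)) -
        ((Real.exp (-τ * (ν*(k:ℝ)^4 - (k:ℝ)^2)) : ℝ) : ℂ) * c k *
          Complex.exp (Complex.I * (k:ℂ) * (x:ℂ))) = fun k => ψ k x := by
      funext k
      rw [hψ]; simp only [hδ]
      push_cast
      ring
    rw [hcongr, Complex.re_tsum (hsum_ψ x)]
  -- conclude
  have hfun : (fun x => Aop ν τ a x - SL ν τ a x) = D := funext hAeq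
  rw [hfun]
  have hderivD : deriv D = D' := funext fun x => (hDd x).deriv
  set P : ℝ := K * Sig2 with hP
  have hPpos : 0 < P := mul_pos hKpos hSigpos
  have hIb : ∀ (f : ℝ → ℝ), Continuous f → (∀ x, |f x| ≤ P) →
      (∫ x in (-π)..π, (f x)^2) ≤ 2 * π * P^2 := by
    intro f hf hfb
    have h1 : (∫ x in (-π)..π, (f x)^2) ≤ ∫ x in (-π)..π, P^2 := by
      apply intervalIntegral.integral_mono_on (by linarith)
      · exact (hf.pow 2).intervalIntegrable _ _
      · exact intervalIntegrable_const
      · intro x _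
        have := hfb x
        nlinarith [abs_nonneg (f x), sq_abs (f x)]
    have h2 : (∫ x in (-π)..π, (P^2 : ℝ)) = 2 * π * P^2 := by
      rw [intervalIntegral.integral_const, smul_eq_mul]
      ring
    linarith
  rw [sobNorm]
  have hrange : Finset.range (1+1) = {0, 1} := by decide
  rw [hrange]
  rw [Finset.sum_insert (by decide), Finset.sum_singleton]
  have hI0' : (∫ x in (-π)..π, (iteratedDeriv 0 D x)^2) ≤ 2 * π * P^2 := by
    rw [iteratedDeriv_zero]
    exact hIb D hDcont hDb
  have hI1' : (∫ x in (-π)..π, (iteratedDeriv 1 D x)^2) ≤ 2 * π * P^2 := by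
    rw [iteratedDeriv_one, hderivD]
    exact hIb D' hD'cont hD'b
  have hsq : Real.sqrt ((∫ x in (-π)..π, (iteratedDeriv 0 D x)^2) +
      (∫ x in (-π)..π, (iteratedDeriv 1 D x)^2)) ≤ 2 * Real.sqrt π * P := by
    have hle : (∫ x in (-π)..π, (iteratedDeriv 0 D x)^2) +
        (∫ x in (-π)..π, (iteratedDeriv 1 D x)^2) ≤ (2 * Real.sqrt π * P)^2 := by
      have : (2 * Real.sqrt π * P)^2 = 4 * π * P^2 := by
        rw [mul_pow, mul_pow, Real.sq_sqrt hpi.le]; ring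
      linarith
    calc Real.sqrt _ ≤ Real.sqrt ((2 * Real.sqrt π * P)^2) := Real.sqrt_le_sqrt hle
    _ = 2 * Real.sqrt π * P := Real.sqrt_sq (by positivity)
  refine le_trans hsq ?_
  rw [hP, hK]
  have hτsq : 0 < τ^2 := by positivity
  nlinarith [Real.sqrt_nonneg π, hSigpos, hBpos, hτsq,
    mul_pos (mul_pos (mul_pos (mul_pos (by positivity : (0:ℝ) < 64) (Real.sqrt_pos.mpr hpi)) hSigpos) (by positivity : (0:ℝ) < (ν+1)^2)) hBpos]
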